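/- Let L be a lattice in V and σ ∈ Aut(L) of prime order p. Then the quotients L e₁/L₁ and L e_ζ/L_ζ are elementary abelian p-groups, there is a group isomorphism L e₁/L₁ ≅ L e_ζ/L_ζ commuting with the action induced by σ, and the common 𝔽_p-dimension s := dim_{𝔽_p}(L e₁/L₁) = dim_{𝔽_p}(L e_ζ/L_ζ) satisfies s ≤ min(n₁, r_ζ). -/

import Mathlib

open Submodule

/-- The dual lattice of `L` with respect to the bilinear form `B`. -/
def dualLattice {V : Type*} [AddCommGroup V] [Module ℚ V]
    (B : V →ₗ[ℚ] V →ₗ[ℚ] ℚ) (L : Submodule ℤ V) : Submodule ℤ V where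
  carrier := {v | ∀ l ∈ L, ∃ k : ℤ, B v l = (k : ℚ)}
  zero_mem' := fun l _ => ⟨0, by simp⟩
  add_mem' := by
    intro a b ha hb l hl
    obtain ⟨k₁, hk₁⟩ := ha l hl
    obtain ⟨k₂, hk₂⟩ := hb l hl
    exact ⟨k₁ + k₂, by push_cast; simp [hk₁, hk₂]⟩
  smul_mem' := by
    intro n a ha l hl
    obtain ⟨k, hk⟩ := ha l hl
    exact ⟨n * k, by push_cast; simp [hk]⟩

/-! Every `l ∈ L` is `e₁ l + e_ζ l`, so `e₁ l ∈ L` exactly when `e_ζ l ∈ L`: both quotients are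
`L` modulo the same subgroup. Both are killed by `p` because `p e₁ = ∑ σ^i` preserves `L`, and
`σ` acts trivially on both. So `L e₁ / L₁` is a quotient of `L e₁ / p L e₁ ≅ 𝔽_p^n₁`, whence
`s ≤ n₁`. On `M := L e_ζ` the map `1 - σ` is injective and `(1 - σ)^(p-1)` divides `p`, as
`(1 - ζ)^(p-1)` does in `ℤ[ζ]`; hence `[M : (1 - σ) M]^(p-1) = [M : (1 - σ)^(p-1) M]` divides
`[M : p M] = p^((p-1) r_ζ)`, and `L e_ζ / L_ζ` is a quotient of `M / (1 - σ) M`, whence `s ≤ r_ζ`.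
-/

section

open Module Polynomial

namespace Submodule

section Glue

variable {R M : Type*} [Ring R] [AddCommGroup M] [Module R M] (L : Submodule R M)

noncomputable def glueMap (e : Module.End R M) :
    L →ₗ[R] (L.map e).map (L ⊓ LinearMap.range e).mkQ :=
  (L ⊓ LinearMap.range e).mkQ.submoduleMap (L.map e) ∘ₗ e.submoduleMap L

theorem glueMap_surjective (e : Module.End R M) : Function.Surjective (L.glueMap e) :=
  (LinearMap.submoduleMap_surjective _ _).comp (LinearMap.submoduleMap_surjective _ _)

theorem mem_ker_glueMap {e : Module.End R M} {x : L} :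
    x ∈ LinearMap.ker (L.glueMap e) ↔ e x ∈ L := by
  simp [glueMap, Subtype.ext_iff, Quotient.mk_eq_zero]

theorem ker_glueMap_eq {e f : Module.End R M} (hef : e + f = 1) :
    LinearMap.ker (L.glueMap e) = LinearMap.ker (L.glueMap f) := by
  ext x
  have hfx : f x = (x : M) - e x := by
    rw [eq_sub_iff_add_eq', ← LinearMap.add_apply, hef, Module.End.one_apply]
  rw [mem_ker_glueMap, mem_ker_glueMap, hfx, sub_mem_iff_right _ x.2]

noncomputable def glueEquiv {e f : Module.End R M} (hef : e + f = 1) :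
    (L.map e).map (L ⊓ LinearMap.range e).mkQ ≃ₗ[R] (L.map f).map (L ⊓ LinearMap.range f).mkQ :=
  ((L.glueMap e).quotKerEquivOfSurjective (L.glueMap_surjective e)).symm ≪≫ₗ
    quotEquivOfEq _ _ (L.ker_glueMap_eq hef) ≪≫ₗ
    (L.glueMap f).quotKerEquivOfSurjective (L.glueMap_surjective f)

end Glue

section Quotient

variable {M : Type*} [AddCommGroup M] {N K : Submodule ℤ M}

theorem zsmul_eq_zero_of_mem_map_mkQ {n : ℤ} (h : ∀ v ∈ N, n • v ∈ K) :
    ∀ x ∈ N.map K.mkQ, n • x = 0 := by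
  rintro _ ⟨v, hv, rfl⟩
  rw [← map_zsmul, mkQ_apply, Quotient.mk_eq_zero]
  exact h v hv

theorem mk_mkQ_eq_of_sub_mem {x y : M} (hx : x ∈ N) (hy : y ∈ N) (hxy : x - y ∈ K) :
    (⟨K.mkQ x, mem_map_of_mem hx⟩ : N.map K.mkQ) = ⟨K.mkQ y, mem_map_of_mem hy⟩ :=
  Subtype.ext ((Quotient.eq K).mpr hxy)

theorem natCard_map_mkQ_dvd_index {H : AddSubgroup N} (hH : ∀ x ∈ H, (x : M) ∈ K) :
    Nat.card (N.map K.mkQ) ∣ H.index := by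
  let f := (K.mkQ.submoduleMap N).toAddMonoidHom
  have hf : f.range = ⊤ := AddMonoidHom.range_eq_top.mpr (K.mkQ.submoduleMap_surjective N)
  have hker : H ≤ f.ker := fun x hx => by
    simpa [f, Subtype.ext_iff, Quotient.mk_eq_zero] using hH x hx
  have := AddSubgroup.index_dvd_of_le hker
  rwa [AddSubgroup.index_ker, hf, AddSubgroup.card_top] at this

end Quotient

end Submodule

section IntLattice

variable {V : Type*} [AddCommGroup V] [Module ℚ V]

theorem Submodule.finrank_span_rat_eq_finrank_int (N : Submodule ℤ V) :
    finrank ℚ (span ℚ (N : Set V)) = finrank ℤ N := by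
  have := isLocalizedModule_id (nonZeroDivisors ℤ) V ℚ
  have h := IsLocalizedModule.finrank_eq (nonZeroDivisors ℤ)
    (N.toLocalized' ℚ (nonZeroDivisors ℤ) (LinearMap.id : V →ₗ[ℤ] V)) le_rfl
  rw [localized'_eq_span, LinearMap.id_coe, Set.image_id] at h
  rwa [IsFractionRing.finrank_right_eq ℤ ℚ]

theorem Submodule.free_int_of_fg {N : Submodule ℤ V} (hN : N.FG) : Module.Free ℤ N := by
  have := Module.IsTorsionFree.trans_faithfulSMul ℤ ℚ V
  have := Module.Finite.iff_fg.mpr hN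
  infer_instance

theorem Submodule.finrank_int_map_restrictScalars {L : Submodule ℤ V}
    (hL : span ℚ (L : Set V) = ⊤) (g : Module.End ℚ V) :
    finrank ℤ (L.map (g.restrictScalars ℤ)) = finrank ℚ (LinearMap.range g) := by
  rw [← finrank_span_rat_eq_finrank_int, map_coe, LinearMap.coe_restrictScalars, span_image, hL,
    map_top]

end IntLattice

theorem IsPrimitiveRoot.prod_Ico_one_sub_pow {R : Type*} [CommRing R] [IsDomain R] {ζ : R}
    {n : ℕ} (hζ : IsPrimitiveRoot ζ n) (hn : 0 < n) :
    ∏ k ∈ Finset.Ico 1 n, (1 - ζ ^ k) = n := by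
  obtain ⟨m, rfl⟩ := Nat.exists_eq_add_one_of_ne_zero hn.ne'
  have hfactor : (X - C 1 : R[X]) * ∑ i ∈ Finset.range (m + 1), X ^ i =
      (X - C 1) * ∏ k ∈ Finset.range m, (X - C (ζ ^ (k + 1))) := by
    rw [C_1, mul_geom_sum, ← C_1, X_pow_sub_C_eq_prod hζ hn (one_pow _), Finset.prod_range_succ',
      mul_comm]
    simp
  have h := congrArg (eval 1) (mul_left_cancel₀ (X_sub_C_ne_zero 1) hfactor)
  simp only [eval_finsetSum, eval_pow, eval_X, one_pow, Finset.sum_const, Finset.card_range,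
    nsmul_eq_mul, mul_one, eval_prod, eval_sub, eval_C] at h
  rw [Finset.prod_Ico_eq_prod_range, h]
  simp [add_comm]

theorem Polynomial.cyclotomic_dvd_prod_Ico_one_sub_X_pow_sub_natCast {n : ℕ} (hn : 0 < n) :
    cyclotomic n ℤ ∣ ∏ k ∈ Finset.Ico 1 n, (1 - X ^ k) - (n : ℤ[X]) := by
  have hζ := Complex.isPrimitiveRoot_exp n hn.ne'
  rw [← map_dvd_map (Int.castRingHom ℚ) (RingHom.injective_int _) (cyclotomic.monic n ℤ),
    map_cyclotomic_int, cyclotomic_eq_minpoly_rat hζ hn]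
  refine minpoly.dvd ℚ _ ?_
  simp [Polynomial.map_prod, hζ.prod_Ico_one_sub_pow hn]

theorem exists_one_sub_pow_mul_eq_of_geom_sum_eq_zero {A : Type*} [Ring A] {s : A} {p : ℕ}
    (hp : p.Prime) (hs : ∑ i ∈ Finset.range p, s ^ i = 0) :
    ∃ w : A, (1 - s) ^ (p - 1) * w = p := by
  obtain ⟨G, hG⟩ := cyclotomic_dvd_prod_Ico_one_sub_X_pow_sub_natCast hp.pos
  have : Fact p.Prime := ⟨hp⟩
  refine ⟨aeval s (∏ k ∈ Finset.Ico 1 p, ∑ j ∈ Finset.range k, X ^ j : ℤ[X]), ?_⟩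
  have hprod : ∏ k ∈ Finset.Ico 1 p, (1 - X ^ k : ℤ[X]) =
      (1 - X) ^ (p - 1) * ∏ k ∈ Finset.Ico 1 p, ∑ j ∈ Finset.range k, X ^ j := by
    simp_rw [← mul_neg_geom_sum, Finset.prod_mul_distrib, Finset.prod_const, Nat.card_Ico]
  have := congrArg (aeval s) (sub_eq_iff_eq_add.mp hG)
  rw [hprod, cyclotomic_prime, map_mul, map_add, map_mul] at this
  simpa [map_sum, hs] using this

section Index

variable {M : Type*} [AddCommGroup M]

theorem Module.End.index_range_pow_of_injective {t : Module.End ℤ M}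
    (ht : Function.Injective t) (k : ℕ) :
    (LinearMap.range (t ^ k)).toAddSubgroup.index =
      (LinearMap.range t).toAddSubgroup.index ^ k := by
  induction k with
  | zero => simp [Module.End.one_eq_id]
  | succ k ih =>
    rw [pow_succ', Module.End.mul_eq_comp, LinearMap.range_comp, Submodule.map_toAddSubgroup,
      AddSubgroup.index_map_of_injective _ ht, ih, pow_succ]
    rfl

theorem Module.End.index_range_one_sub_dvd_pow [Free ℤ M] [Module.Finite ℤ M]
    {s : Module.End ℤ M} {p r : ℕ} (hp : p.Prime) (hs : ∑ i ∈ Finset.range p, s ^ i = 0)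
    (hinj : Function.Injective ⇑(1 - s)) (hr : finrank ℤ M = (p - 1) * r) :
    (LinearMap.range (1 - s)).toAddSubgroup.index ∣ p ^ r := by
  obtain ⟨w, hw⟩ := exists_one_sub_pow_mul_eq_of_geom_sum_eq_zero hp hs
  have hle : (nsmulAddMonoidHom (α := M) p).range ≤
      (LinearMap.range ((1 - s) ^ (p - 1))).toAddSubgroup := by
    rintro _ ⟨x, rfl⟩
    exact ⟨w x, by simp [← Module.End.mul_apply, hw]⟩
  have hdvd := AddSubgroup.index_dvd_of_le hle
  rw [AddSubgroup.index_range_nsmul, hr, Module.End.index_range_pow_of_injective hinj,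
    pow_mul'] at hdvd
  exact (Nat.pow_dvd_pow_iff (Nat.sub_ne_zero_of_lt hp.one_lt)).mp hdvd

end Index

section GeomSum

variable {A : Type*} [Ring A] {σ : A} {p : ℕ}

theorem mul_geom_sum_of_pow_eq_one (h : σ ^ p = 1) :
    σ * ∑ i ∈ Finset.range p, σ ^ i = ∑ i ∈ Finset.range p, σ ^ i := by
  have := mul_geom_sum σ p
  rwa [h, sub_self, sub_one_mul, sub_eq_zero] at this

theorem geom_sum_mul_of_pow_eq_one (h : σ ^ p = 1) :
    (∑ i ∈ Finset.range p, σ ^ i) * σ = ∑ i ∈ Finset.range p, σ ^ i := by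
  have := geom_sum_mul σ p
  rwa [h, sub_self, mul_sub_one, sub_eq_zero] at this

theorem geom_sum_mul_geom_sum_of_pow_eq_one (h : σ ^ p = 1) :
    (∑ i ∈ Finset.range p, σ ^ i) * ∑ i ∈ Finset.range p, σ ^ i =
      p • ∑ i ∈ Finset.range p, σ ^ i := by
  have hpow : ∀ k : ℕ, (∑ i ∈ Finset.range p, σ ^ i) * σ ^ k = ∑ i ∈ Finset.range p, σ ^ i := by
    intro k
    induction k with
    | zero => rw [pow_zero, mul_one]
    | succ k ih => rw [pow_succ, ← mul_assoc, ih, geom_sum_mul_of_pow_eq_one h]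
  rw [Finset.mul_sum, Finset.sum_congr rfl fun k _ => hpow k, Finset.sum_const, Finset.card_range]

end GeomSum

noncomputable def cyclicAverage {A : Type*} [Ring A] [Algebra ℚ A] (p : ℕ) (σ : A) : A :=
  (p : ℚ)⁻¹ • ∑ i ∈ Finset.range p, σ ^ i

section CyclicAverage

variable {A : Type*} [Ring A] [Algebra ℚ A] {σ : A} {p : ℕ}

theorem mul_cyclicAverage (h : σ ^ p = 1) : σ * cyclicAverage p σ = cyclicAverage p σ := by
  rw [cyclicAverage, mul_smul_comm, mul_geom_sum_of_pow_eq_one h]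

theorem cyclicAverage_mul (h : σ ^ p = 1) : cyclicAverage p σ * σ = cyclicAverage p σ := by
  rw [cyclicAverage, smul_mul_assoc, geom_sum_mul_of_pow_eq_one h]

theorem natCast_smul_cyclicAverage (hp : p ≠ 0) :
    (p : ℚ) • cyclicAverage p σ = ∑ i ∈ Finset.range p, σ ^ i :=
  smul_inv_smul₀ (Nat.cast_ne_zero.mpr hp) _

theorem geom_sum_mul_one_sub_cyclicAverage (hp : p ≠ 0) (h : σ ^ p = 1) :
    (∑ i ∈ Finset.range p, σ ^ i) * (1 - cyclicAverage p σ) = 0 := by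
  rw [mul_sub, mul_one, cyclicAverage, mul_smul_comm, geom_sum_mul_geom_sum_of_pow_eq_one h,
    ← Nat.cast_smul_eq_nsmul ℚ, inv_smul_smul₀ (Nat.cast_ne_zero.mpr hp), sub_self]

end CyclicAverage

section LatticeAverage

variable {V : Type*} [AddCommGroup V] [Module ℚ V] {p : ℕ} {σ : Module.End ℚ V}
  {L : Submodule ℤ V}

theorem geom_sum_apply_mem (hσL : ∀ v ∈ L, σ v ∈ L) {v : V} (hv : v ∈ L) :
    (∑ i ∈ Finset.range p, σ ^ i) v ∈ L := by
  rw [LinearMap.sum_apply]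
  refine sum_mem fun i _ => ?_
  simpa [Module.End.coe_pow] using
    Module.End.pow_apply_mem_of_forall_mem (f' := σ.restrictScalars ℤ) i hσL v hv

theorem natCast_zsmul_cyclicAverage_apply (hp : p ≠ 0) (v : V) :
    (p : ℤ) • cyclicAverage p σ v = (∑ i ∈ Finset.range p, σ ^ i) v := by
  rw [natCast_zsmul, ← Nat.cast_smul_eq_nsmul ℚ, ← LinearMap.smul_apply,
    natCast_smul_cyclicAverage hp]

theorem zsmul_mem_inf_range_cyclicAverage (hp : p ≠ 0) (hσL : ∀ v ∈ L, σ v ∈ L) :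
    ∀ v ∈ L.map ((cyclicAverage p σ).restrictScalars ℤ),
      (p : ℤ) • v ∈ L ⊓ LinearMap.range ((cyclicAverage p σ).restrictScalars ℤ) := by
  rintro _ ⟨l, hl, rfl⟩
  refine ⟨?_, (p : ℤ) • l, map_zsmul _ _ _⟩
  rw [LinearMap.restrictScalars_apply, natCast_zsmul_cyclicAverage_apply hp]
  exact geom_sum_apply_mem hσL hl

theorem zsmul_mem_inf_range_one_sub_cyclicAverage (hp : p ≠ 0) (hσL : ∀ v ∈ L, σ v ∈ L) :
    ∀ v ∈ L.map ((1 - cyclicAverage p σ).restrictScalars ℤ),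
      (p : ℤ) • v ∈ L ⊓ LinearMap.range ((1 - cyclicAverage p σ).restrictScalars ℤ) := by
  rintro _ ⟨l, hl, rfl⟩
  refine ⟨?_, (p : ℤ) • l, map_zsmul _ _ _⟩
  rw [LinearMap.restrictScalars_apply, LinearMap.sub_apply, Module.End.one_apply, smul_sub,
    natCast_zsmul_cyclicAverage_apply hp]
  exact sub_mem (L.smul_mem _ hl) (geom_sum_apply_mem hσL hl)

theorem apply_cyclicAverage_apply (hσp : σ ^ p = 1) (v : V) :
    σ (cyclicAverage p σ v) = cyclicAverage p σ v := by
  rw [← Module.End.mul_apply, mul_cyclicAverage hσp]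

theorem sub_apply_mem_inf_range_one_sub_cyclicAverage (hσp : σ ^ p = 1)
    (hσL : ∀ v ∈ L, σ v ∈ L) :
    ∀ v ∈ L.map ((1 - cyclicAverage p σ).restrictScalars ℤ),
      v - σ v ∈ L ⊓ LinearMap.range ((1 - cyclicAverage p σ).restrictScalars ℤ) := by
  rintro _ ⟨l, hl, rfl⟩
  have heσ : cyclicAverage p σ (σ l) = cyclicAverage p σ l := by
    rw [← Module.End.mul_apply, cyclicAverage_mul hσp]
  have hv : (1 - cyclicAverage p σ) l - σ ((1 - cyclicAverage p σ) l) = l - σ l := by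
    simp only [LinearMap.sub_apply, Module.End.one_apply, map_sub, apply_cyclicAverage_apply hσp]
    abel
  rw [LinearMap.restrictScalars_apply, hv]
  exact ⟨sub_mem hl (hσL l hl), l - σ l, by simp [heσ]⟩

theorem geom_sum_apply_eq_zero_of_mem_range (hp : p ≠ 0) (hσp : σ ^ p = 1) {v : V}
    (hv : v ∈ LinearMap.range (1 - cyclicAverage p σ)) :
    (∑ i ∈ Finset.range p, σ ^ i) v = 0 := by
  obtain ⟨u, rfl⟩ := hv
  rw [← Module.End.mul_apply, geom_sum_mul_one_sub_cyclicAverage hp hσp, LinearMap.zero_apply]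

theorem eq_zero_of_mem_range_of_apply_eq_self (hp : p ≠ 0) (hσp : σ ^ p = 1) {v : V}
    (hv : v ∈ LinearMap.range (1 - cyclicAverage p σ)) (hfix : σ v = v) : v = 0 := by
  have hpow : ∀ i, (σ ^ i) v = v := fun i => by
    rw [Module.End.coe_pow, Function.iterate_fixed hfix]
  have := geom_sum_apply_eq_zero_of_mem_range hp hσp hv
  rw [LinearMap.sum_apply, Finset.sum_congr rfl fun i _ => hpow i,
    Finset.sum_const, Finset.card_range, ← Nat.cast_smul_eq_nsmul ℚ, smul_eq_zero,
    Nat.cast_eq_zero] at this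
  exact this.resolve_left hp

theorem natCard_map_mkQ_cyclicAverage_dvd (hp : p ≠ 0) (hσL : ∀ v ∈ L, σ v ∈ L)
    (hLfg : L.FG) (hL : span ℚ (L : Set V) = ⊤) :
    Nat.card ((L.map ((cyclicAverage p σ).restrictScalars ℤ)).map
        (L ⊓ LinearMap.range ((cyclicAverage p σ).restrictScalars ℤ)).mkQ) ∣
      p ^ finrank ℚ (LinearMap.range (cyclicAverage p σ)) := by
  have := free_int_of_fg (hLfg.map ((cyclicAverage p σ).restrictScalars ℤ))
  have := Module.Finite.iff_fg.mpr (hLfg.map ((cyclicAverage p σ).restrictScalars ℤ))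
  rw [← finrank_int_map_restrictScalars hL, ← AddSubgroup.index_range_nsmul]
  refine natCard_map_mkQ_dvd_index ?_
  rintro _ ⟨x, rfl⟩
  simpa using zsmul_mem_inf_range_cyclicAverage hp hσL x x.2

theorem natCard_map_mkQ_one_sub_cyclicAverage_dvd (hp : p.Prime) (hσp : σ ^ p = 1)
    (hσL : ∀ v ∈ L, σ v ∈ L) (hLfg : L.FG) (hL : span ℚ (L : Set V) = ⊤) {r : ℕ}
    (hr : finrank ℚ (LinearMap.range (1 - cyclicAverage p σ)) = (p - 1) * r) :
    Nat.card ((L.map ((1 - cyclicAverage p σ).restrictScalars ℤ)).map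
        (L ⊓ LinearMap.range ((1 - cyclicAverage p σ).restrictScalars ℤ)).mkQ) ∣ p ^ r := by
  set f := (1 - cyclicAverage p σ).restrictScalars ℤ
  have := free_int_of_fg (hLfg.map f)
  have := Module.Finite.iff_fg.mpr (hLfg.map f)
  have hcomm : Commute σ (1 - cyclicAverage p σ) :=
    (Commute.one_right σ).sub_right ((mul_cyclicAverage hσp).trans (cyclicAverage_mul hσp).symm)
  have hσN : ∀ v ∈ L.map f, σ.restrictScalars ℤ v ∈ L.map f := by
    rintro _ ⟨l, hl, rfl⟩
    exact ⟨σ l, hσL l hl, (LinearMap.congr_fun hcomm l).symm⟩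
  have hNrange : ∀ v ∈ L.map f, v ∈ LinearMap.range (1 - cyclicAverage p σ) := by
    rintro _ ⟨l, -, rfl⟩
    exact ⟨l, rfl⟩
  set s := (σ.restrictScalars ℤ).restrict hσN
  have hs : ∑ i ∈ Finset.range p, s ^ i = 0 := by
    ext x
    simp only [s, Module.End.pow_restrict _ hσN, LinearMap.sum_apply]
    simpa [Module.End.coe_pow] using
      geom_sum_apply_eq_zero_of_mem_range hp.ne_zero hσp (hNrange x x.2)
  have hinj : Function.Injective ⇑(1 - s) := by
    rw [← LinearMap.ker_eq_bot, eq_bot_iff]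
    intro x hx
    have hx' : (x : V) - σ x = 0 := congrArg Subtype.val hx
    exact Subtype.ext (eq_zero_of_mem_range_of_apply_eq_self hp.ne_zero hσp (hNrange x x.2)
      (sub_eq_zero.mp hx').symm)
  refine (natCard_map_mkQ_dvd_index (H := (LinearMap.range (1 - s)).toAddSubgroup) ?_).trans
    (Module.End.index_range_one_sub_dvd_pow hp hs hinj ?_)
  · rintro _ ⟨x, rfl⟩
    exact sub_apply_mem_inf_range_one_sub_cyclicAverage hσp hσL x x.2
  · rw [finrank_int_map_restrictScalars hL, hr]

end LatticeAverage

end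

theorem glue_group_iso_general
    {V : Type*} [AddCommGroup V] [Module ℚ V]
    (L : Submodule ℤ V) (hLfg : L.FG)
    (hLfull : Submodule.span ℚ (L : Set V) = ⊤)
    (p : ℕ) (hp : p.Prime)
    (σ : Module.End ℚ V)
    (hσL : ∀ v, σ v ∈ L ↔ v ∈ L)
    (hσp : σ ^ p = 1)
    (e1 eζ : Module.End ℚ V)
    (he1 : e1 = (p : ℚ)⁻¹ • ∑ i ∈ Finset.range p, σ ^ i)
    (heζ : eζ = 1 - e1)
    (V1 Vζ : Submodule ℚ V)
    (hV1 : V1 = LinearMap.range e1) (hVζ : Vζ = LinearMap.range eζ)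
    (n1 rζ : ℕ) (hn1 : n1 = Module.finrank ℚ V1)
    (hrζ : Module.finrank ℚ Vζ = (p - 1) * rζ)
    (L1 Lζ : Submodule ℤ V)
    (hL1 : L1 = L ⊓ V1.restrictScalars ℤ)
    (hLζ : Lζ = L ⊓ Vζ.restrictScalars ℤ)
    (Le1 Leζ : Submodule ℤ V)
    (hLe1 : Le1 = L.map (e1.restrictScalars ℤ))
    (hLeζ : Leζ = L.map (eζ.restrictScalars ℤ)) :
    -- both quotients are elementary abelian `p`-groups
    (∀ x ∈ Le1.map L1.mkQ, (p : ℤ) • x = 0) ∧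
    (∀ x ∈ Leζ.map Lζ.mkQ, (p : ℤ) • x = 0) ∧
    -- there is a group isomorphism `L e₁/L₁ ≅ L e_ζ/L_ζ` commuting with the action of `σ`
    (∃ φ : (Le1.map L1.mkQ) ≃+ (Leζ.map Lζ.mkQ),
      ∀ (v w : V) (hv : v ∈ Le1) (hw : w ∈ Leζ) (hv' : σ v ∈ Le1) (hw' : σ w ∈ Leζ),
        φ ⟨L1.mkQ v, Submodule.mem_map_of_mem hv⟩ = ⟨Lζ.mkQ w, Submodule.mem_map_of_mem hw⟩ →
        φ ⟨L1.mkQ (σ v), Submodule.mem_map_of_mem hv'⟩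
          = ⟨Lζ.mkQ (σ w), Submodule.mem_map_of_mem hw'⟩) ∧
    -- and the common `𝔽_p`-dimension `s` satisfies `s ≤ min (n₁, r_ζ)`
    (∃ s : ℕ, Nat.card (Le1.map L1.mkQ) = p ^ s ∧ Nat.card (Leζ.map Lζ.mkQ) = p ^ s ∧
      s ≤ min n1 rζ) := by
  obtain rfl : e1 = cyclicAverage p σ := he1
  subst heζ hV1 hVζ hn1
  rw [← LinearMap.range_restrictScalars] at hL1 hLζ
  subst hL1 hLζ hLe1 hLeζ
  have hσL' : ∀ v ∈ L, σ v ∈ L := fun v hv => (hσL v).mpr hv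
  obtain ⟨s, hs1, hcard1⟩ := (Nat.dvd_prime_pow hp).mp
    (natCard_map_mkQ_cyclicAverage_dvd hp.ne_zero hσL' hLfg hLfull)
  let φ := L.glueEquiv (e := (cyclicAverage p σ).restrictScalars ℤ)
    (f := (1 - cyclicAverage p σ).restrictScalars ℤ) (by ext; simp)
  have hcardζ := (Nat.card_congr φ.toEquiv).symm.trans hcard1
  refine ⟨zsmul_eq_zero_of_mem_map_mkQ (zsmul_mem_inf_range_cyclicAverage hp.ne_zero hσL'),
    zsmul_eq_zero_of_mem_map_mkQ (zsmul_mem_inf_range_one_sub_cyclicAverage hp.ne_zero hσL'),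
    ⟨φ.toAddEquiv, fun v w hv hw hv' hw' hvw => ?_⟩, s, hcard1, hcardζ, le_min hs1 ?_⟩
  · have hσv : σ v = v := by
      obtain ⟨l, -, rfl⟩ := hv
      exact apply_cyclicAverage_apply hσp l
    rw [mk_mkQ_eq_of_sub_mem hv' hv (by simp [hσv]), hvw]
    exact mk_mkQ_eq_of_sub_mem hw hw'
      (sub_apply_mem_inf_range_one_sub_cyclicAverage hσp hσL' w hw)
  · have hdvdζ := natCard_map_mkQ_one_sub_cyclicAverage_dvd hp hσp hσL' hLfg hLfull hrζ
    rwa [hcardζ, Nat.pow_dvd_pow_iff_le_right hp.one_lt] at hdvdζ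

/-- `L e₁/L₁` and `L e_ζ/L_ζ` are elementary abelian `p`-groups, isomorphic via an
isomorphism commuting with the action of `σ`, and their common `𝔽_p`-dimension `s`
satisfies `s ≤ min (n₁, r_ζ)`. The quotient `L e₁/L₁` is realized as the image of
`L e₁` in `V ⧸ L₁`, and similarly for `ζ`. -/
theorem glue_group_iso
    {V : Type*} [AddCommGroup V] [Module ℚ V] [FiniteDimensional ℚ V]
    (B : V →ₗ[ℚ] V →ₗ[ℚ] ℚ)
    (hBsymm : ∀ x y, B x y = B y x)
    (hBpos : ∀ x, x ≠ 0 → 0 < B x x)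
    (L : Submodule ℤ V) (hLfg : L.FG)
    (hLfull : Submodule.span ℚ (L : Set V) = ⊤)
    (p : ℕ) (hp : p.Prime)
    (σ : Module.End ℚ V)
    (hσB : ∀ x y, B (σ x) (σ y) = B x y)
    (hσL : ∀ v, σ v ∈ L ↔ v ∈ L)
    (hσp : σ ^ p = 1) (hσ1 : σ ≠ 1)
    (e1 eζ : Module.End ℚ V)
    (he1 : e1 = (p : ℚ)⁻¹ • ∑ i ∈ Finset.range p, σ ^ i)
    (heζ : eζ = 1 - e1)
    (V1 Vζ : Submodule ℚ V)
    (hV1 : V1 = LinearMap.range e1) (hVζ : Vζ = LinearMap.range eζ)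
    (n1 rζ : ℕ) (hn1 : n1 = Module.finrank ℚ V1)
    (hrζ : Module.finrank ℚ Vζ = (p - 1) * rζ)
    (L1 Lζ : Submodule ℤ V)
    (hL1 : L1 = L ⊓ V1.restrictScalars ℤ)
    (hLζ : Lζ = L ⊓ Vζ.restrictScalars ℤ)
    (Le1 Leζ : Submodule ℤ V)
    (hLe1 : Le1 = L.map (e1.restrictScalars ℤ))
    (hLeζ : Leζ = L.map (eζ.restrictScalars ℤ)) :
    -- both quotients are elementary abelian `p`-groups
    (∀ x ∈ Le1.map L1.mkQ, (p : ℤ) • x = 0) ∧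
    (∀ x ∈ Leζ.map Lζ.mkQ, (p : ℤ) • x = 0) ∧
    -- there is a group isomorphism `L e₁/L₁ ≅ L e_ζ/L_ζ` commuting with the action of `σ`
    (∃ φ : (Le1.map L1.mkQ) ≃+ (Leζ.map Lζ.mkQ),
      ∀ (v w : V) (hv : v ∈ Le1) (hw : w ∈ Leζ) (hv' : σ v ∈ Le1) (hw' : σ w ∈ Leζ),
        φ ⟨L1.mkQ v, Submodule.mem_map_of_mem hv⟩ = ⟨Lζ.mkQ w, Submodule.mem_map_of_mem hw⟩ →
        φ ⟨L1.mkQ (σ v), Submodule.mem_map_of_mem hv'⟩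
          = ⟨Lζ.mkQ (σ w), Submodule.mem_map_of_mem hw'⟩) ∧
    -- and the common `𝔽_p`-dimension `s` satisfies `s ≤ min (n₁, r_ζ)`
    (∃ s : ℕ, Nat.card (Le1.map L1.mkQ) = p ^ s ∧ Nat.card (Leζ.map Lζ.mkQ) = p ^ s ∧
      s ≤ min n1 rζ) :=
  glue_group_iso_general L hLfg hLfull p hp σ hσL hσp e1 eζ he1 heζ V1 Vζ hV1 hVζ n1 rζ hn1 hrζ L1
    Lζ hL1 hLζ Le1 Leζ hLe1 hLeζ
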